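/- Let p ≥ 2, let f : ℝ^d → ℝ be convex, differentiable, and L-smooth w.r.t. ‖·‖_p with minimizer x*, and let (x_t) be HASD iterates started at x_0 with ‖x_0 − x*‖_2 ≤ R. Let ε > 0, suppose Ĝ satisfies 1 ≤ Ĝ ≤ (1/T) ∑_{t=0}^{T-1} ‖∇f(x_{t+1})‖_{p*}/‖∇f(x_{t+1})‖_2 where T = ⌈18√2 · L R/(Ĝ ε)⌉. Then ‖∇f(x_T)‖_{p*} ≤ ε. -/

import Mathlib

open scoped BigOperators
open scoped InnerProductSpace

/-- The `ℓ_p` "norm" on `ℝ^d` for a real exponent `p`. -/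
noncomputable def pnorm (p : ℝ) {d : ℕ} (x : EuclideanSpace ℝ (Fin d)) : ℝ :=
  (∑ i, |x i| ^ p) ^ (1 / p)

/-- The dual exponent `p* = p/(p-1)`, so that `1/p + 1/p* = 1`. -/
noncomputable def dualExp (p : ℝ) : ℝ := p / (p - 1)

/-- The iterates of the Hyper-Accelerated Steepest Descent (HASD) method for
`f : ℝ^d → ℝ` differentiable, smoothness constant `L > 0`, started at `x0`. -/
structure HASD (d : ℕ) (p L : ℝ) (f : EuclideanSpace ℝ (Fin d) → ℝ)
    (x0 : EuclideanSpace ℝ (Fin d)) where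
  x : ℕ → EuclideanSpace ℝ (Fin d)
  y : ℕ → EuclideanSpace ℝ (Fin d)
  v : ℕ → EuclideanSpace ℝ (Fin d)
  a : ℕ → ℝ
  A : ℕ → ℝ
  ρ : ℕ → ℝ
  ψ : ℕ → EuclideanSpace ℝ (Fin d) → ℝ
  x_zero : x 0 = x0
  A_zero : A 0 = 0
  ψ_zero : ∀ z, ψ 0 z = (1 / 2) * pnorm 2 (z - x0) ^ 2
  /-- `v t` minimizes `ψ t` over `ℝ^d`. -/
  v_min : ∀ t z, ψ t (v t) ≤ ψ t z
  grad_ne : ∀ t : ℕ, gradient f (x (t + 1)) ≠ 0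
  ρ_pos : ∀ t : ℕ, 0 < ρ t
  ρ_lb : ∀ t : ℕ, (1 / 2) * (pnorm 2 (gradient f (x (t + 1))) ^ 2 /
      pnorm (dualExp p) (gradient f (x (t + 1))) ^ 2) ≤ ρ t
  ρ_ub : ∀ t : ℕ, ρ t ≤ 2 * (pnorm 2 (gradient f (x (t + 1))) ^ 2 /
      pnorm (dualExp p) (gradient f (x (t + 1))) ^ 2)
  a_pos : ∀ t : ℕ, 0 < a (t + 1)
  a_eq : ∀ t : ℕ, a (t + 1) ^ 2 = (A t + a (t + 1)) / (18 * L * ρ t)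
  A_succ : ∀ t : ℕ, A (t + 1) = A t + a (t + 1)
  y_def : ∀ t : ℕ, y t = (1 - a (t + 1) / A (t + 1)) • x t + (a (t + 1) / A (t + 1)) • v t
  /-- `x (t+1)` minimizes `z ↦ ⟪∇f(y t), z - y t⟫ + L ‖z - y t‖_p²` over `ℝ^d`. -/
  x_min : ∀ (t : ℕ) (z : EuclideanSpace ℝ (Fin d)),
      ⟪gradient f (y t), x (t + 1) - y t⟫_ℝ + L * pnorm p (x (t + 1) - y t) ^ 2 ≤
      ⟪gradient f (y t), z - y t⟫_ℝ + L * pnorm p (z - y t) ^ 2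
  ψ_succ : ∀ (t : ℕ) (z : EuclideanSpace ℝ (Fin d)),
      ψ (t + 1) z = ψ t z + a (t + 1) * (f (x (t + 1)) + ⟪gradient f (x (t + 1)), z - x (t + 1)⟫_ℝ)

/-!
The estimate functions `ψ_t` (the proximity term `½‖· − x₀‖²` plus `A_t` worth of affine
minorants of `f`) satisfy `A_t f(x_t) ≤ min ψ_t ≤ A_t f(x⋆) + ½‖x⋆ − x₀‖²`. The left inequality
survives a step because an `ℓ_p` steepest-descent step guarantees
`‖∇f(x_{t+1})‖_{p*}² / (16L) ≤ ⟪∇f(x_{t+1}), y_t − x_{t+1}⟫`, which, by the choice of `a_{t+1}`,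
pays for the Euclidean loss `a_{t+1}² ‖∇f(x_{t+1})‖₂² / 2` of moving the minimizer of `ψ`.
The same choice makes `√A_t` grow by `‖∇f(x_{t+1})‖_{p*} / (12 √L ‖∇f(x_{t+1})‖₂)` per step,
so `A_T ≥ (T Ĝ)² / (144 L)`. Hence
`‖∇f(x_T)‖_{p*}² ≤ 4L (f(x_T) − f(x⋆)) ≤ 2 L R² / A_T ≤ (4/9) ε²` by the choice of `T`.
-/

section PNorm

variable {d : ℕ}

lemma pnorm_nonneg (q : ℝ) (x : EuclideanSpace ℝ (Fin d)) : 0 ≤ pnorm q x := by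
  unfold pnorm
  positivity

lemma pnorm_zero {q : ℝ} (hq : q ≠ 0) : pnorm q (0 : EuclideanSpace ℝ (Fin d)) = 0 := by
  simp [pnorm, Real.zero_rpow hq, Real.zero_rpow (inv_ne_zero hq)]

lemma pnorm_pos (q : ℝ) {x : EuclideanSpace ℝ (Fin d)} (hx : x ≠ 0) : 0 < pnorm q x := by
  obtain ⟨i, hi⟩ : ∃ i, x i ≠ 0 := by
    by_contra! h
    exact hx (by ext i; simpa using h i)
  have hsum : 0 < ∑ j, |x j| ^ q :=
    Finset.sum_pos' (fun j _ => by positivity) ⟨i, Finset.mem_univ i, by positivity⟩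
  exact Real.rpow_pos_of_pos hsum _

lemma pnorm_two_eq_norm (x : EuclideanSpace ℝ (Fin d)) : pnorm 2 x = ‖x‖ := by
  simp only [pnorm, EuclideanSpace.norm_eq, Real.sqrt_eq_rpow, Real.norm_eq_abs, Real.rpow_two]

lemma pnorm_neg (q : ℝ) (x : EuclideanSpace ℝ (Fin d)) : pnorm q (-x) = pnorm q x := by
  simp [pnorm]

lemma pnorm_smul {q : ℝ} (hq : q ≠ 0) (c : ℝ) (x : EuclideanSpace ℝ (Fin d)) :
    pnorm q (c • x) = |c| * pnorm q x := by
  have hterm : ∀ i, |(c • x) i| ^ q = |c| ^ q * |x i| ^ q := fun i => by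
    rw [PiLp.smul_apply, smul_eq_mul, abs_mul, Real.mul_rpow (abs_nonneg _) (abs_nonneg _)]
  simp only [pnorm, hterm, ← Finset.mul_sum]
  rw [Real.mul_rpow (by positivity) (by positivity), ← Real.rpow_mul (abs_nonneg c),
    mul_one_div_cancel hq, Real.rpow_one]

lemma pnorm_add_le {q : ℝ} (hq : 1 ≤ q) (x y : EuclideanSpace ℝ (Fin d)) :
    pnorm q (x + y) ≤ pnorm q x + pnorm q y :=
  Real.Lp_add_le Finset.univ (fun i => x i) (fun i => y i) hq

lemma inner_le_pnorm_mul_pnorm {p q : ℝ} (hpq : p.HolderConjugate q)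
    (x y : EuclideanSpace ℝ (Fin d)) : ⟪x, y⟫_ℝ ≤ pnorm p x * pnorm q y := by
  have hinner : ⟪x, y⟫_ℝ = ∑ i, x i * y i := by
    simp [PiLp.inner_apply, mul_comm]
  rw [hinner]
  exact Real.inner_le_Lp_mul_Lq Finset.univ (fun i => x i) (fun i => y i) hpq

lemma holderConjugate_dualExp {p : ℝ} (hp : 1 < p) : p.HolderConjugate (dualExp p) :=
  Real.HolderConjugate.conjExponent hp

end PNorm

section Duality

variable {d : ℕ} {p q : ℝ}

lemma exists_pnorm_eq_one_inner_eq (hpq : p.HolderConjugate q) {g : EuclideanSpace ℝ (Fin d)}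
    (hg : g ≠ 0) : ∃ w : EuclideanSpace ℝ (Fin d), pnorm p w = 1 ∧ ⟪g, w⟫_ℝ = pnorm q g := by
  have hq1 : 1 < q := hpq.symm.lt
  set N := pnorm q g
  have hN : 0 < N := pnorm_pos q hg
  have hNq : N ^ q = ∑ i, |g i| ^ q := by
    simp only [N, pnorm]
    rw [one_div, Real.rpow_inv_rpow (by positivity) (by linarith)]
  -- the extremal vector of Hölder's inequality, before normalization
  set w : EuclideanSpace ℝ (Fin d) := WithLp.toLp 2 fun i => Real.sign (g i) * |g i| ^ (q - 1)
  have habs : ∀ i, |w i| = |g i| ^ (q - 1) := fun i => by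
    rcases lt_trichotomy (g i) 0 with hi | hi | hi
    · simp [w, Real.sign_of_neg hi, abs_of_nonneg (Real.rpow_nonneg (abs_nonneg (g i)) _)]
    · simp [w, hi, Real.zero_rpow (by linarith : q - 1 ≠ 0)]
    · simp [w, Real.sign_of_pos hi, abs_of_nonneg (Real.rpow_nonneg (abs_nonneg (g i)) _)]
  have hmul : ∀ i, g i * w i = |g i| ^ q := fun i => by
    have hsign : g i * Real.sign (g i) = |g i| := by
      rcases lt_trichotomy (g i) 0 with hi | hi | hi
      · simp [Real.sign_of_neg hi, abs_of_neg hi]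
      · simp [hi]
      · simp [Real.sign_of_pos hi, abs_of_pos hi]
    rw [show g i * w i = g i * Real.sign (g i) * |g i| ^ (q - 1) by simp [w, mul_assoc], hsign,
      ← Real.rpow_one_add' (abs_nonneg _) (by linarith), add_sub_cancel]
  have hexp : (q - 1) * p = q := by
    have := hpq.inv_add_inv_eq_one
    field_simp [hpq.ne_zero, hpq.symm.ne_zero] at this ⊢
    linarith
  have hw : pnorm p w = N ^ (q - 1) := by
    have hterm : ∀ i, |w i| ^ p = |g i| ^ q := fun i => by
      rw [habs, ← Real.rpow_mul (abs_nonneg _), hexp]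
    rw [pnorm, Finset.sum_congr rfl fun i _ => hterm i, ← hNq, ← Real.rpow_mul hN.le]
    congr 1
    field_simp [hpq.ne_zero]
    linarith
  have hgw : ⟪g, w⟫_ℝ = N ^ q := by
    simp [PiLp.inner_apply, mul_comm, hmul, hNq]
  refine ⟨(N ^ (q - 1))⁻¹ • w, ?_, ?_⟩
  · rw [pnorm_smul hpq.ne_zero, hw, abs_of_pos (by positivity), inv_mul_cancel₀ (by positivity)]
  · rw [real_inner_smul_right, hgw, ← Real.rpow_neg hN.le, ← Real.rpow_add hN]
    norm_num

lemma exists_inner_add_mul_pnorm_sq_eq (hpq : p.HolderConjugate q) {L : ℝ} (hL : 0 < L)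
    (g : EuclideanSpace ℝ (Fin d)) :
    ∃ z : EuclideanSpace ℝ (Fin d), ⟪g, z⟫_ℝ + L * pnorm p z ^ 2 = -(pnorm q g ^ 2 / (4 * L)) := by
  rcases eq_or_ne g 0 with rfl | hg
  · exact ⟨0, by simp [pnorm_zero hpq.ne_zero, pnorm_zero hpq.symm.ne_zero]⟩
  obtain ⟨w, hw1, hgw⟩ := exists_pnorm_eq_one_inner_eq hpq hg
  refine ⟨-(pnorm q g / (2 * L)) • w, ?_⟩
  rw [real_inner_smul_right, hgw, pnorm_smul hpq.ne_zero, hw1, abs_neg,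
    abs_of_nonneg (by positivity [pnorm_nonneg q g])]
  field_simp
  ring

end Duality

section Smooth

variable {d : ℕ} {f : EuclideanSpace ℝ (Fin d) → ℝ}

lemma hasDerivAt_comp_add_smul (hf : Differentiable ℝ f) (y u : EuclideanSpace ℝ (Fin d)) (s : ℝ) :
    HasDerivAt (fun s : ℝ => f (y + s • u)) ⟪gradient f (y + s • u), u⟫_ℝ s := by
  have hline : HasDerivAt (fun s : ℝ => y + s • u) u s := by
    simpa using ((hasDerivAt_id s).smul_const u).const_add y
  rw [gradient, InnerProductSpace.toDual_symm_apply]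
  exact (hf _).hasFDerivAt.comp_hasDerivAt s hline

lemma ConvexOn.add_inner_gradient_le (hconv : ConvexOn ℝ Set.univ f) (hf : Differentiable ℝ f)
    (x z : EuclideanSpace ℝ (Fin d)) : f x + ⟪gradient f x, z - x⟫_ℝ ≤ f z := by
  have hline : ConvexOn ℝ Set.univ fun s : ℝ => f (x + s • (z - x)) := by
    have hcomp : (fun s : ℝ => f (x + s • (z - x))) = f ∘ AffineMap.lineMap x z := by
      ext s
      simp [AffineMap.lineMap_apply, add_comm]
    simpa [hcomp] using hconv.comp_affineMap (AffineMap.lineMap x z)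
  have hslope := hline.le_slope_of_hasDerivAt (Set.mem_univ 0) (Set.mem_univ 1) one_pos
    (hasDerivAt_comp_add_smul hf x (z - x) 0)
  simp only [zero_smul, add_zero, one_smul, add_sub_cancel, slope_def_field, sub_zero,
    div_one] at hslope
  linarith

lemma le_add_inner_gradient_add_mul_pnorm_sq {p q L : ℝ} (hpq : p.HolderConjugate q) (hL : 0 ≤ L)
    (hf : Differentiable ℝ f)
    (hsmooth : ∀ x y, pnorm q (gradient f y - gradient f x) ≤ L * pnorm p (y - x))
    (y z : EuclideanSpace ℝ (Fin d)) :
    f z ≤ f y + ⟪gradient f y, z - y⟫_ℝ + L * pnorm p (z - y) ^ 2 := by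
  set u := z - y
  obtain ⟨c, ⟨hc0, hc1⟩, hmvt⟩ := exists_hasDerivAt_eq_slope (fun s : ℝ => f (y + s • u))
    (fun s => ⟪gradient f (y + s • u), u⟫_ℝ) one_pos
    (hf.continuous.comp (by fun_prop)).continuousOn
    (fun s _ => hasDerivAt_comp_add_smul hf y u s)
  simp only [one_smul, zero_smul, add_zero, u, add_sub_cancel, sub_zero, div_one] at hmvt
  have hgrad : pnorm q (gradient f (y + c • u) - gradient f y) ≤ L * (c * pnorm p u) := by
    simpa [pnorm_smul hpq.ne_zero, abs_of_pos hc0] using hsmooth y (y + c • u)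
  have hcross : ⟪gradient f (y + c • u) - gradient f y, u⟫_ℝ ≤ L * pnorm p u ^ 2 :=
    calc _ ≤ pnorm q (gradient f (y + c • u) - gradient f y) * pnorm p u := by
          rw [real_inner_comm, mul_comm]; exact inner_le_pnorm_mul_pnorm hpq u _
      _ ≤ L * (c * pnorm p u) * pnorm p u := by gcongr; exact pnorm_nonneg p u
      _ ≤ L * pnorm p u ^ 2 := by
          have := pnorm_nonneg p u
          nlinarith [mul_nonneg (mul_nonneg hL (mul_nonneg this this)) (sub_nonneg.2 hc1.le)]
  rw [inner_sub_left] at hcross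
  linarith

end Smooth

section SteepestDescent

variable {d : ℕ} {p q L : ℝ} {f : EuclideanSpace ℝ (Fin d) → ℝ}

lemma sq_pnorm_gradient_le_of_forall_le (hpq : p.HolderConjugate q) (hL : 0 < L)
    (hf : Differentiable ℝ f)
    (hsmooth : ∀ x y, pnorm q (gradient f y - gradient f x) ≤ L * pnorm p (y - x))
    {xstar : EuclideanSpace ℝ (Fin d)} (hxstar : ∀ z, f xstar ≤ f z)
    (x : EuclideanSpace ℝ (Fin d)) : pnorm q (gradient f x) ^ 2 ≤ 4 * L * (f x - f xstar) := by
  obtain ⟨z, hz⟩ := exists_inner_add_mul_pnorm_sq_eq hpq hL (gradient f x)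
  have hdesc := le_add_inner_gradient_add_mul_pnorm_sq hpq hL.le hf hsmooth x (x + z)
  rw [add_sub_cancel_left, add_assoc, hz] at hdesc
  have := hxstar (x + z)
  have : pnorm q (gradient f x) ^ 2 / (4 * L) ≤ f x - f xstar := by linarith
  rwa [div_le_iff₀ (by positivity), mul_comm] at this

lemma sq_pnorm_gradient_div_le_inner_of_steepest_step (hpq : p.HolderConjugate q) (hL : 0 < L)
    (hsmooth : ∀ x y, pnorm q (gradient f y - gradient f x) ≤ L * pnorm p (y - x))
    {x y : EuclideanSpace ℝ (Fin d)}
    (hx : ∀ z, ⟪gradient f y, x - y⟫_ℝ + L * pnorm p (x - y) ^ 2 ≤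
      ⟪gradient f y, z - y⟫_ℝ + L * pnorm p (z - y) ^ 2) :
    pnorm q (gradient f x) ^ 2 / (16 * L) ≤ ⟪gradient f x, y - x⟫_ℝ := by
  set g := gradient f y
  set G := gradient f x
  set r := pnorm p (x - y)
  have hr : 0 ≤ r := pnorm_nonneg p (x - y)
  have hNg : 0 ≤ pnorm q g := pnorm_nonneg q g
  have hmodel : ⟪g, x - y⟫_ℝ + L * r ^ 2 ≤ -(pnorm q g ^ 2 / (4 * L)) := by
    obtain ⟨z, hz⟩ := exists_inner_add_mul_pnorm_sq_eq hpq hL g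
    simpa [hz] using hx (y + z)
  have hHolder : -(pnorm q g * r) ≤ ⟪g, x - y⟫_ℝ := by
    have := inner_le_pnorm_mul_pnorm hpq.symm g (y - x)
    rwa [← neg_sub, pnorm_neg, inner_neg_right, neg_le] at this
  -- the model minimum pins the step length: `2 L r = ‖g‖_q`
  have hstep : L * r ≤ pnorm q g := by
    have hsq : (2 * L * r - pnorm q g) ^ 2 ≤ 0 := by
      have hexpand : (2 * L * r - pnorm q g) ^ 2 =
          4 * L * (L * r ^ 2 - pnorm q g * r + pnorm q g ^ 2 / (4 * L)) := by
        field_simp; ring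
      rw [hexpand]
      exact mul_nonpos_of_nonneg_of_nonpos (by positivity) (by linarith)
    have := pow_eq_zero_iff two_ne_zero |>.mp (le_antisymm hsq (sq_nonneg _))
    linarith
  have hsmooth_xy : pnorm q (G - g) ≤ L * r := hsmooth y x
  have hG : pnorm q G ≤ 2 * pnorm q g := by
    have := pnorm_add_le hpq.symm.lt.le g (G - g)
    rw [add_sub_cancel] at this
    linarith
  have hcross : ⟪G - g, x - y⟫_ℝ ≤ L * r ^ 2 := by
    have := inner_le_pnorm_mul_pnorm hpq.symm (G - g) (x - y)
    nlinarith
  have hsplit : ⟪G, y - x⟫_ℝ = -⟪g, x - y⟫_ℝ - ⟪G - g, x - y⟫_ℝ := by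
    rw [← neg_sub x y, inner_neg_right, inner_sub_left]
    ring
  calc pnorm q G ^ 2 / (16 * L) ≤ (2 * pnorm q g) ^ 2 / (16 * L) := by
        gcongr; exact pnorm_nonneg q G
    _ = pnorm q g ^ 2 / (4 * L) := by field_simp; ring
    _ ≤ ⟪G, y - x⟫_ℝ := by rw [hsplit]; linarith

end SteepestDescent

namespace HASD

variable {d : ℕ} {p L : ℝ} {f : EuclideanSpace ℝ (Fin d) → ℝ} {x0 : EuclideanSpace ℝ (Fin d)}
  (h : HASD d p L f x0)

lemma A_nonneg (t : ℕ) : 0 ≤ h.A t := by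
  induction t with
  | zero => rw [h.A_zero]
  | succ t ih => rw [h.A_succ]; linarith [h.a_pos t]

lemma A_succ_pos (t : ℕ) : 0 < h.A (t + 1) := by
  rw [h.A_succ]; linarith [h.a_pos t, h.A_nonneg t]

lemma exists_ψ_eq (t : ℕ) : ∃ (m : EuclideanSpace ℝ (Fin d)) (e : ℝ),
    ∀ z, h.ψ t z = (1 / 2) * ‖z - m‖ ^ 2 + e := by
  induction t with
  | zero => exact ⟨x0, 0, fun z => by rw [h.ψ_zero, pnorm_two_eq_norm, add_zero]⟩
  | succ t ih =>
    obtain ⟨m, e, hm⟩ := ih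
    set G := gradient f (h.x (t + 1))
    set a := h.a (t + 1)
    -- completing the square: the linear term shifts the centre by `-a G`
    refine ⟨m - a • G, e + a * (f (h.x (t + 1)) + ⟪G, m - h.x (t + 1)⟫_ℝ) - a ^ 2 / 2 * ‖G‖ ^ 2,
      fun z => ?_⟩
    have hsq : ‖z - (m - a • G)‖ ^ 2 = ‖z - m‖ ^ 2 + 2 * a * ⟪G, z - m⟫_ℝ + a ^ 2 * ‖G‖ ^ 2 := by
      rw [show z - (m - a • G) = (z - m) + a • G by abel, norm_add_sq_real, norm_smul,
        real_inner_smul_right, real_inner_comm, Real.norm_eq_abs, mul_pow, sq_abs]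
      ring
    have hlin : ⟪G, z - h.x (t + 1)⟫_ℝ = ⟪G, z - m⟫_ℝ + ⟪G, m - h.x (t + 1)⟫_ℝ := by
      rw [← inner_add_right, sub_add_sub_cancel]
    rw [h.ψ_succ, hm, hsq, hlin]
    ring

lemma ψ_eq_ψ_v_add (t : ℕ) (z : EuclideanSpace ℝ (Fin d)) :
    h.ψ t z = h.ψ t (h.v t) + (1 / 2) * ‖z - h.v t‖ ^ 2 := by
  obtain ⟨m, e, hm⟩ := h.exists_ψ_eq t
  have hv : h.v t = m := by
    have := h.v_min t m
    rw [hm, hm, sub_self, norm_zero] at this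
    have : ‖h.v t - m‖ ^ 2 ≤ 0 := by linarith
    exact sub_eq_zero.mp (norm_eq_zero.mp (pow_eq_zero_iff two_ne_zero |>.mp
      (le_antisymm this (sq_nonneg _))))
  rw [hm, hm, hv, sub_self, norm_zero]
  ring

lemma A_succ_smul_y_sub (t : ℕ) (w : EuclideanSpace ℝ (Fin d)) :
    h.A (t + 1) • (h.y t - w) = h.A t • (h.x t - w) + h.a (t + 1) • (h.v t - w) := by
  have hA := h.A_succ_pos t
  have hcoef : h.A (t + 1) * (1 - h.a (t + 1) / h.A (t + 1)) = h.A t := by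
    field_simp; linarith [h.A_succ t]
  rw [h.y_def, smul_sub, smul_add, smul_smul, smul_smul, hcoef, mul_div_cancel₀ _ hA.ne',
    smul_sub, smul_sub, h.A_succ, add_smul]
  abel

lemma sq_a_mul_sq_norm_gradient_le (hL : 0 < L) (t : ℕ) :
    h.a (t + 1) ^ 2 * ‖gradient f (h.x (t + 1))‖ ^ 2 ≤
      h.A (t + 1) * pnorm (dualExp p) (gradient f (h.x (t + 1))) ^ 2 / (9 * L) := by
  set G := gradient f (h.x (t + 1))
  have hN : 0 < pnorm (dualExp p) G := pnorm_pos _ (h.grad_ne t)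
  have hρ : ‖G‖ ^ 2 ≤ 2 * h.ρ t * pnorm (dualExp p) G ^ 2 := by
    have := h.ρ_lb t
    rw [pnorm_two_eq_norm] at this
    rw [← div_le_iff₀ (by positivity)]
    linarith
  have ha : h.a (t + 1) ^ 2 = h.A (t + 1) / (18 * L * h.ρ t) := by rw [h.a_eq, h.A_succ]
  have hρpos := h.ρ_pos t
  rw [ha, div_mul_eq_mul_div, div_le_div_iff₀ (by positivity) (by positivity)]
  nlinarith [mul_le_mul_of_nonneg_left hρ (by positivity [(h.A_succ_pos t).le] :
    0 ≤ h.A (t + 1) * (9 * L))]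

lemma A_mul_le_ψ_v (hp : 1 < p) (hL : 0 < L) (hconv : ConvexOn ℝ Set.univ f)
    (hf : Differentiable ℝ f)
    (hsmooth : ∀ x y, pnorm (dualExp p) (gradient f y - gradient f x) ≤ L * pnorm p (y - x))
    (t : ℕ) : h.A t * f (h.x t) ≤ h.ψ t (h.v t) := by
  induction t with
  | zero => rw [h.A_zero, h.ψ_zero, zero_mul]; positivity
  | succ t ih =>
    set x' := h.x (t + 1)
    set G := gradient f x'
    set a := h.a (t + 1)
    set v' := h.v (t + 1)
    set N := pnorm (dualExp p) G
    have hA := h.A_nonneg t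
    have hA' := h.A_succ_pos t
    have hψ : h.ψ (t + 1) v' = h.ψ t (h.v t) + (1 / 2) * ‖v' - h.v t‖ ^ 2 +
        a * (f x' + ⟪G, h.v t - x'⟫_ℝ + ⟪G, v' - h.v t⟫_ℝ) := by
      rw [h.ψ_succ, h.ψ_eq_ψ_v_add t v', add_assoc (f x'), ← inner_add_right, sub_add_sub_cancel']
    have hconvex : h.A t * (f x' + ⟪G, h.x t - x'⟫_ℝ) ≤ h.A t * f (h.x t) :=
      mul_le_mul_of_nonneg_left (hconv.add_inner_gradient_le hf x' (h.x t)) hA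
    have hy : h.A (t + 1) * ⟪G, h.y t - x'⟫_ℝ =
        h.A t * ⟪G, h.x t - x'⟫_ℝ + a * ⟪G, h.v t - x'⟫_ℝ := by
      simpa only [inner_add_right, real_inner_smul_right] using
        congrArg (fun w => ⟪G, w⟫_ℝ) (h.A_succ_smul_y_sub t x')
    have hstep : N ^ 2 / (16 * L) ≤ ⟪G, h.y t - x'⟫_ℝ :=
      sq_pnorm_gradient_div_le_inner_of_steepest_step (holderConjugate_dualExp hp) hL hsmooth
        (h.x_min t)
    have hyoung : -(a ^ 2 * ‖G‖ ^ 2 / 2) ≤ a * ⟪G, v' - h.v t⟫_ℝ + (1 / 2) * ‖v' - h.v t‖ ^ 2 := by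
      have := norm_add_sq_real (v' - h.v t) (a • G)
      rw [norm_smul, real_inner_smul_right, real_inner_comm, Real.norm_eq_abs, mul_pow, sq_abs]
        at this
      nlinarith [sq_nonneg ‖v' - h.v t + a • G‖]
    have hbudget : a ^ 2 * ‖G‖ ^ 2 / 2 ≤ h.A (t + 1) * ⟪G, h.y t - x'⟫_ℝ :=
      calc a ^ 2 * ‖G‖ ^ 2 / 2 ≤ h.A (t + 1) * N ^ 2 / (9 * L) / 2 := by
            gcongr; exact h.sq_a_mul_sq_norm_gradient_le hL t
        _ = h.A (t + 1) * (N ^ 2 / (18 * L)) := by ring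
        _ ≤ h.A (t + 1) * (N ^ 2 / (16 * L)) := by
            apply mul_le_mul_of_nonneg_left _ hA'.le; gcongr; norm_num
        _ ≤ h.A (t + 1) * ⟪G, h.y t - x'⟫_ℝ := mul_le_mul_of_nonneg_left hstep hA'.le
    rw [hψ, h.A_succ]
    linarith

lemma ψ_le_A_mul_add (hconv : ConvexOn ℝ Set.univ f) (hf : Differentiable ℝ f) (t : ℕ)
    (z : EuclideanSpace ℝ (Fin d)) : h.ψ t z ≤ h.A t * f z + (1 / 2) * ‖z - x0‖ ^ 2 := by
  induction t with
  | zero => rw [h.A_zero, h.ψ_zero, zero_mul, zero_add, pnorm_two_eq_norm]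
  | succ t ih =>
    rw [h.ψ_succ, h.A_succ]
    nlinarith [mul_le_mul_of_nonneg_left (hconv.add_inner_gradient_le hf (h.x (t + 1)) z)
      (h.a_pos t).le]

lemma A_mul_sub_le (hp : 1 < p) (hL : 0 < L) (hconv : ConvexOn ℝ Set.univ f)
    (hf : Differentiable ℝ f)
    (hsmooth : ∀ x y, pnorm (dualExp p) (gradient f y - gradient f x) ≤ L * pnorm p (y - x))
    (t : ℕ) (z : EuclideanSpace ℝ (Fin d)) :
    h.A t * (f (h.x t) - f z) ≤ (1 / 2) * ‖z - x0‖ ^ 2 := by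
  have hψv := h.A_mul_le_ψ_v hp hL hconv hf hsmooth t
  have hvz := h.v_min t z
  have hψz := h.ψ_le_A_mul_add hconv hf t z
  linarith [mul_sub (h.A t) (f (h.x t)) (f z)]

lemma sq_pnorm_gradient_mul_A_le (hp : 1 < p) (hL : 0 < L) (hconv : ConvexOn ℝ Set.univ f)
    (hf : Differentiable ℝ f)
    (hsmooth : ∀ x y, pnorm (dualExp p) (gradient f y - gradient f x) ≤ L * pnorm p (y - x))
    {xstar : EuclideanSpace ℝ (Fin d)} (hxstar : ∀ z, f xstar ≤ f z) (t : ℕ) :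
    pnorm (dualExp p) (gradient f (h.x t)) ^ 2 * h.A t ≤ 2 * L * ‖xstar - x0‖ ^ 2 := by
  have hgrad := sq_pnorm_gradient_le_of_forall_le (holderConjugate_dualExp hp) hL hf hsmooth
    hxstar (h.x t)
  calc _ ≤ 4 * L * (f (h.x t) - f xstar) * h.A t :=
        mul_le_mul_of_nonneg_right hgrad (h.A_nonneg t)
    _ = 4 * L * (h.A t * (f (h.x t) - f xstar)) := by ring
    _ ≤ 4 * L * ((1 / 2) * ‖xstar - x0‖ ^ 2) := by
        exact mul_le_mul_of_nonneg_left (h.A_mul_sub_le hp hL hconv hf hsmooth t xstar)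
          (by positivity)
    _ = 2 * L * ‖xstar - x0‖ ^ 2 := by ring

lemma pnorm_div_norm_gradient_le (hL : 0 < L) (t : ℕ) :
    pnorm (dualExp p) (gradient f (h.x (t + 1))) / pnorm 2 (gradient f (h.x (t + 1))) ≤
      12 * √L * (√(h.A (t + 1)) - √(h.A t)) := by
  set G := gradient f (h.x (t + 1))
  set N := pnorm (dualExp p) G
  have hN : 0 < N := pnorm_pos _ (h.grad_ne t)
  have hG : 0 < pnorm 2 G := pnorm_pos _ (h.grad_ne t)
  have hρ : h.ρ t * N ^ 2 ≤ 2 * pnorm 2 G ^ 2 := by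
    have := h.ρ_ub t
    rwa [mul_div_assoc', le_div_iff₀ (by positivity)] at this
  have hρpos := h.ρ_pos t
  set s := √(h.A t)
  set s' := √(h.A (t + 1))
  have hs : s ^ 2 = h.A t := Real.sq_sqrt (h.A_nonneg t)
  have hs' : s' ^ 2 = h.A (t + 1) := Real.sq_sqrt (h.A_succ_pos t).le
  have hs'pos : 0 < s' := Real.sqrt_pos.mpr (h.A_succ_pos t)
  -- `a = s'² - s² ≤ 2 s' (s' - s)`, and `(a / 2 s')² = 1 / (72 L ρ)`
  have ha : h.a (t + 1) ≤ 2 * s' * (s' - s) := by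
    nlinarith [h.A_succ t, sq_nonneg (s' - s), Real.sqrt_nonneg (h.A t)]
  have hsq : (N / pnorm 2 G) ^ 2 ≤ (12 * √L * (h.a (t + 1) / (2 * s'))) ^ 2 := by
    have ha2 := h.a_eq t
    rw [← h.A_succ, ← hs'] at ha2
    rw [div_pow, mul_pow, mul_pow, div_pow, Real.sq_sqrt hL.le, ha2, mul_pow,
      div_le_iff₀ (by positivity)]
    field_simp
    nlinarith
  calc N / pnorm 2 G ≤ 12 * √L * (h.a (t + 1) / (2 * s')) :=
        le_of_pow_le_pow_left₀ two_ne_zero (by positivity [h.a_pos t]) hsq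
    _ ≤ 12 * √L * (s' - s) := by
        gcongr
        rw [div_le_iff₀ (by positivity)]
        linarith

lemma sq_sum_pnorm_div_norm_gradient_le (hL : 0 < L) (T : ℕ) :
    (∑ t ∈ Finset.range T,
      pnorm (dualExp p) (gradient f (h.x (t + 1))) / pnorm 2 (gradient f (h.x (t + 1)))) ^ 2 ≤
      144 * L * h.A T := by
  have hsum : ∑ t ∈ Finset.range T,
      pnorm (dualExp p) (gradient f (h.x (t + 1))) / pnorm 2 (gradient f (h.x (t + 1))) ≤
      12 * √L * √(h.A T) :=
    calc _ ≤ ∑ t ∈ Finset.range T, 12 * √L * (√(h.A (t + 1)) - √(h.A t)) :=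
          Finset.sum_le_sum fun t _ => h.pnorm_div_norm_gradient_le hL t
      _ = 12 * √L * √(h.A T) := by
          rw [← Finset.mul_sum, Finset.sum_range_sub (fun t => √(h.A t)), h.A_zero,
            Real.sqrt_zero, sub_zero]
  have hnonneg : 0 ≤ ∑ t ∈ Finset.range T,
      pnorm (dualExp p) (gradient f (h.x (t + 1))) / pnorm 2 (gradient f (h.x (t + 1))) :=
    Finset.sum_nonneg fun t _ => div_nonneg (pnorm_nonneg _ _) (pnorm_nonneg _ _)
  calc _ ≤ (12 * √L * √(h.A T)) ^ 2 := pow_le_pow_left₀ hnonneg hsum 2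
    _ = 144 * L * h.A T := by
        rw [mul_pow, mul_pow, Real.sq_sqrt hL.le, Real.sq_sqrt (h.A_nonneg T)]; ring

end HASD

theorem stmt9 {d : ℕ} (p L : ℝ) (hp : 2 ≤ p) (hL : 0 < L)
    (f : EuclideanSpace ℝ (Fin d) → ℝ) (hconv : ConvexOn ℝ Set.univ f)
    (hf : Differentiable ℝ f)
    (hsmooth : ∀ x y : EuclideanSpace ℝ (Fin d),
      pnorm (dualExp p) (gradient f y - gradient f x) ≤ L * pnorm p (y - x))
    (xstar : EuclideanSpace ℝ (Fin d)) (hxstar : ∀ z, f xstar ≤ f z)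
    (x0 : EuclideanSpace ℝ (Fin d)) (h : HASD d p L f x0)
    (R : ℝ) (hR : pnorm 2 (x0 - xstar) ≤ R)
    (ε Ghat : ℝ) (hε : 0 < ε) (hGhat : 1 ≤ Ghat)
    (T : ℕ) (hT : T = ⌈18 * Real.sqrt 2 * L * R / (Ghat * ε)⌉₊)
    (hG : Ghat ≤ (1 / (T : ℝ)) * ∑ t ∈ Finset.range T,
      pnorm (dualExp p) (gradient f (h.x (t + 1))) / pnorm 2 (gradient f (h.x (t + 1)))) :
    pnorm (dualExp p) (gradient f (h.x T)) ≤ ε := by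
  have hp1 : 1 < p := by linarith
  have hT0 : (0 : ℝ) < T := by
    rcases T.eq_zero_or_pos with rfl | hT0
    · simp at hG; linarith
    · exact_mod_cast hT0
  have hA : (T * Ghat) ^ 2 ≤ 144 * L * h.A T := by
    rw [one_div, inv_mul_eq_div, le_div_iff₀ hT0, mul_comm] at hG
    exact (pow_le_pow_left₀ (by positivity) hG 2).trans (h.sq_sum_pnorm_div_norm_gradient_le hL T)
  have hdist : ‖xstar - x0‖ ≤ R := by rwa [← pnorm_two_eq_norm, ← pnorm_neg, neg_sub]
  have hceil : 18 * √2 * L * R ≤ T * (Ghat * ε) := by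
    rw [← div_le_iff₀ (by positivity), hT]
    exact Nat.le_ceil _
  set N := pnorm (dualExp p) (gradient f (h.x T))
  have hN : N ^ 2 * (T * Ghat) ^ 2 ≤ (2 / 3 * ε) ^ 2 * (T * Ghat) ^ 2 :=
    calc N ^ 2 * (T * Ghat) ^ 2 ≤ 144 * L * (N ^ 2 * h.A T) := by nlinarith [sq_nonneg N]
      _ ≤ 144 * L * (2 * L * R ^ 2) := by
          refine mul_le_mul_of_nonneg_left ?_ (by positivity)
          exact (h.sq_pnorm_gradient_mul_A_le hp1 hL hconv hf hsmooth hxstar T).trans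
            (by gcongr)
      _ = 4 / 9 * (18 * √2 * L * R) ^ 2 := by
          rw [mul_pow, mul_pow, mul_pow, Real.sq_sqrt zero_le_two]; ring
      _ ≤ 4 / 9 * (T * (Ghat * ε)) ^ 2 := by
          gcongr; positivity [(norm_nonneg _).trans hdist]
      _ = (2 / 3 * ε) ^ 2 * (T * Ghat) ^ 2 := by ring
  have hN' := le_of_pow_le_pow_left₀ two_ne_zero (by positivity)
    (le_of_mul_le_mul_right hN (by positivity))
  linarith
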